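/- arXiv:1607.01579 — 7 statements merged into one kernel-verified Lean document; each statement's English description precedes it below -/
import Mathlib

section
/- Let A ∈ ℂ^{m×n}, U ∈ ℂ^{m×r}, V ∈ ℂ^{n×r}, and define the block matrices N = [[A, U], [−V*, I]] ∈ ℂ^{(m+r)×(n+r)} and Y = [[I, 0], [V*, I]] ∈ ℂ^{(n+r)×(n+r)}. If R(U) ⊆ R(A) and R(V) ⊆ R(A*), then F_N·Y = F_N if and only if R(V*) ⊆ R(S_A*), where S_A = I + V*A†U. -/
open Matrix

/-- `Z` is the Moore–Penrose inverse of `A`. -/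
def IsMP {m n : Type*} [Fintype m] [Fintype n]
    (A : Matrix m n ℂ) (Z : Matrix n m ℂ) : Prop :=
  A * Z * A = A ∧ Z * A * Z = Z ∧ (A * Z)ᴴ = A * Z ∧ (Z * A)ᴴ = Z * A

private lemma factor_of_range_le {k l p : Type*} [Fintype k] [Fintype l] [Fintype p]
    [DecidableEq l]
    {K : Matrix k p ℂ} {M : Matrix k l ℂ}
    (h : LinearMap.range M.mulVecLin ≤ LinearMap.range K.mulVecLin) :
    ∃ B : Matrix p l ℂ, K * B = M := by
  choose b hb using fun j : l =>
    LinearMap.mem_range.mp (h (LinearMap.mem_range_self M.mulVecLin (Pi.single j 1)))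
  refine ⟨Matrix.of fun i j => b j i, ?_⟩
  ext i j
  have := congrFun (hb j) i
  simp only [Matrix.mulVecLin_apply, Matrix.mulVec_single, mul_one] at this
  simpa [Matrix.mul_apply, Matrix.mulVec, dotProduct] using this

private lemma range_le_of_factor {k l p : Type*} [Fintype k] [Fintype l] [Fintype p]
    {K : Matrix k p ℂ} {M : Matrix k l ℂ} {B : Matrix p l ℂ} (h : K * B = M) :
    LinearMap.range M.mulVecLin ≤ LinearMap.range K.mulVecLin := by
  rintro y ⟨x, rfl⟩
  exact ⟨B *ᵥ x, by simp [Matrix.mulVecLin_apply, ← h, Matrix.mulVec_mulVec]⟩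

theorem stmt_3 {m n r : ℕ}
    (A : Matrix (Fin m) (Fin n) ℂ) (U : Matrix (Fin m) (Fin r) ℂ)
    (V : Matrix (Fin n) (Fin r) ℂ)
    (Adag : Matrix (Fin n) (Fin m) ℂ) (hAdag : IsMP A Adag)
    (N : Matrix (Fin m ⊕ Fin r) (Fin n ⊕ Fin r) ℂ) (hN : N = Matrix.fromBlocks A U (-Vᴴ) 1)
    (Y : Matrix (Fin n ⊕ Fin r) (Fin n ⊕ Fin r) ℂ) (hY : Y = Matrix.fromBlocks 1 0 Vᴴ 1)
    (Ndag : Matrix (Fin n ⊕ Fin r) (Fin m ⊕ Fin r) ℂ) (hNdag : IsMP N Ndag)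
    (S : Matrix (Fin r) (Fin r) ℂ) (hS : S = 1 + Vᴴ * Adag * U)
    (hU : LinearMap.range U.mulVecLin ≤ LinearMap.range A.mulVecLin)
    (hV : LinearMap.range V.mulVecLin ≤ LinearMap.range Aᴴ.mulVecLin) :
    (1 - Ndag * N) * Y = 1 - Ndag * N ↔
      LinearMap.range Vᴴ.mulVecLin ≤ LinearMap.range Sᴴ.mulVecLin := by
  obtain ⟨hA1, hA2, hA3, hA4⟩ := hAdag
  obtain ⟨hN1, hN2, hN3, hN4⟩ := hNdag
  obtain ⟨X, hX⟩ := factor_of_range_le hU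
  obtain ⟨Z, hZ⟩ := factor_of_range_le hV
  -- basic consequences of the range conditions
  have hU1 : A * Adag * U = U := by
    rw [← hX, ← Matrix.mul_assoc, hA1]
  have h1 : Aᴴ * (Adagᴴ * Aᴴ) = Aᴴ := by
    have := congrArg conjTranspose hA1
    simpa [conjTranspose_mul, Matrix.mul_assoc] using this
  have h2 : Adag * A * Aᴴ = Aᴴ := by
    rw [← hA4, conjTranspose_mul, Matrix.mul_assoc]; exact h1
  have hV1 : Adag * A * V = V := by
    rw [← hZ, ← Matrix.mul_assoc, h2]
  have hW : Aᴴ * Adagᴴ * V = V := by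
    rw [← conjTranspose_mul, hA4, hV1]
  have hUH : Uᴴ * (Adagᴴ * Aᴴ) = Uᴴ := by
    have := congrArg conjTranspose hU1
    simpa [conjTranspose_mul, Matrix.mul_assoc] using this
  have hSH : Sᴴ = 1 + Uᴴ * Adagᴴ * V := by
    rw [hS]; simp [conjTranspose_mul, Matrix.mul_assoc]
  have hPNH : Ndag * N * Nᴴ = Nᴴ := by
    have h := congrArg conjTranspose hN1
    rw [← hN4, conjTranspose_mul, Matrix.mul_assoc]
    simpa [conjTranspose_mul, Matrix.mul_assoc] using h
  have hYm : Y - 1 = fromBlocks 0 0 Vᴴ (0 : Matrix (Fin r) (Fin r) ℂ) := by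
    rw [hY]
    ext i j
    cases i <;> cases j <;>
      simp [Matrix.sub_apply, Matrix.one_apply, Matrix.fromBlocks_apply₁₁,
        Matrix.fromBlocks_apply₁₂, Matrix.fromBlocks_apply₂₁, Matrix.fromBlocks_apply₂₂]
  have hiff : (1 - Ndag * N) * Y = 1 - Ndag * N ↔ Ndag * N * (Y - 1) = Y - 1 := by
    constructor
    · intro h
      have h0 : (1 - Ndag * N) * (Y - 1) = 0 := by rw [mul_sub, h, mul_one, sub_self]
      rw [sub_mul, one_mul] at h0
      exact (sub_eq_zero.mp h0).symm
    · intro h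
      have h0 : (1 - Ndag * N) * (Y - 1) = 0 := by rw [sub_mul, one_mul, h, sub_self]
      rw [mul_sub, mul_one] at h0
      exact sub_eq_zero.mp h0
  rw [hiff]
  constructor
  · intro h
    have hM : Nᴴ * (Ndagᴴ * (Y - 1)) = Y - 1 := by
      rw [← Matrix.mul_assoc, ← conjTranspose_mul, hN4]; exact h
    set M := Ndagᴴ * (Y - 1) with hMdef
    rw [← fromBlocks_toBlocks M, hN, fromBlocks_conjTranspose] at hM
    simp only [conjTranspose_neg, conjTranspose_conjTranspose, conjTranspose_one] at hM
    rw [fromBlocks_multiply, hYm] at hM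
    have e11 := congrArg Matrix.toBlocks₁₁ hM
    have e21 := congrArg Matrix.toBlocks₂₁ hM
    simp only [toBlocks_fromBlocks₁₁, toBlocks_fromBlocks₂₁] at e11 e21
    rw [Matrix.neg_mul] at e11
    have e11' : Aᴴ * M.toBlocks₁₁ = V * M.toBlocks₂₁ := add_neg_eq_zero.mp e11
    rw [Matrix.one_mul] at e21
    have hfac : Sᴴ * M.toBlocks₂₁ = Vᴴ := by
      rw [hSH, Matrix.add_mul, Matrix.one_mul, Matrix.mul_assoc, Matrix.mul_assoc, ← e11',
        ← Matrix.mul_assoc Adagᴴ, ← Matrix.mul_assoc Uᴴ, hUH, add_comm]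
      exact e21
    exact range_le_of_factor hfac
  · intro h
    obtain ⟨B, hB⟩ := factor_of_range_le h
    have t1 : Aᴴ * (Adagᴴ * (V * B)) + (-V) * B = 0 := by
      rw [← Matrix.mul_assoc, ← Matrix.mul_assoc, hW]
      simp [Matrix.neg_mul]
    have hS' : Uᴴ * Adagᴴ * V = Sᴴ - 1 := by rw [hSH]; abel
    have t2 : Uᴴ * (Adagᴴ * (V * B)) + (1 : Matrix (Fin r) (Fin r) ℂ) * B = Vᴴ := by
      rw [Matrix.one_mul, ← Matrix.mul_assoc, ← Matrix.mul_assoc, hS', Matrix.sub_mul,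
        Matrix.one_mul]
      rw [show Sᴴ * B - B + B = Sᴴ * B from by abel, hB]
    have hNQ : Nᴴ * fromBlocks (Adagᴴ * (V * B)) 0 B (0 : Matrix (Fin r) (Fin r) ℂ)
        = Y - 1 := by
      rw [hN, fromBlocks_conjTranspose]
      simp only [conjTranspose_neg, conjTranspose_conjTranspose, conjTranspose_one]
      rw [fromBlocks_multiply, hYm, t1, t2]
      simp
    rw [← hNQ, ← Matrix.mul_assoc, hPNH]
end

section
/- Let A ∈ ℂ^{m×n}, U ∈ ℂ^{m×r}, V ∈ ℂ^{n×r}, and S_A = I + V*A†U. If R(U) ⊆ R(A), R(V) ⊆ R(A*), R(U*) ⊆ R(S_A) ∩ R(S_A*), and R(V*) ⊆ R(S_A) ∩ R(S_A*), then (A + UV*)† = A† − A†U (I + V*A†U)† V*A†. -/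
open Matrix

/-- Range inclusion gives a matrix factorization. -/
lemma range_factor {l p q : Type*} [Fintype l] [Fintype p] [Fintype q] [DecidableEq q]
    (A : Matrix l p ℂ) (X : Matrix l q ℂ)
    (h : LinearMap.range X.mulVecLin ≤ LinearMap.range A.mulVecLin) :
    ∃ W : Matrix p q ℂ, X = A * W := by
  choose w hw using fun j : q => h (LinearMap.mem_range_self X.mulVecLin (Pi.single j 1))
  refine ⟨Matrix.of (fun i j => w j i), ?_⟩
  ext i j
  have := congrFun (hw j) i
  simp only [Matrix.mulVecLin_apply, Matrix.mulVec, dotProduct, Pi.single_apply,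
    mul_ite, mul_one, mul_zero, Finset.sum_ite_eq', Finset.mem_univ, if_true] at this
  simp [Matrix.mul_apply, ← this]

theorem stmt_5 {m n r : ℕ}
    (A : Matrix (Fin m) (Fin n) ℂ) (U : Matrix (Fin m) (Fin r) ℂ)
    (V : Matrix (Fin n) (Fin r) ℂ)
    (Adag : Matrix (Fin n) (Fin m) ℂ) (hAdag : IsMP A Adag)
    (S : Matrix (Fin r) (Fin r) ℂ) (hS : S = 1 + Vᴴ * Adag * U)
    (Sdag : Matrix (Fin r) (Fin r) ℂ) (hSdag : IsMP S Sdag)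
    (hU : LinearMap.range U.mulVecLin ≤ LinearMap.range A.mulVecLin)
    (hV : LinearMap.range V.mulVecLin ≤ LinearMap.range Aᴴ.mulVecLin)
    (hUs : LinearMap.range Uᴴ.mulVecLin ≤
      LinearMap.range S.mulVecLin ⊓ LinearMap.range Sᴴ.mulVecLin)
    (hVs : LinearMap.range Vᴴ.mulVecLin ≤
      LinearMap.range S.mulVecLin ⊓ LinearMap.range Sᴴ.mulVecLin) :
    IsMP (A + U * Vᴴ) (Adag - Adag * U * Sdag * Vᴴ * Adag) := by
  obtain ⟨Wu, hWu⟩ := range_factor A U hU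
  obtain ⟨Wv, hWv⟩ := range_factor Aᴴ V hV
  obtain ⟨W1, hW1⟩ := range_factor S Vᴴ (le_trans hVs inf_le_left)
  obtain ⟨W2, hW2⟩ := range_factor Sᴴ Vᴴ (le_trans hVs inf_le_right)
  obtain ⟨hA1, hA2, hA3, hA4⟩ := hAdag
  obtain ⟨hS1, hS2, hS3, hS4⟩ := hSdag
  -- basic facts
  have f1 : A * Adag * U = U := by rw [hWu, ← Matrix.mul_assoc, hA1]
  have hVH : Vᴴ = Wvᴴ * A := by rw [hWv, conjTranspose_mul, conjTranspose_conjTranspose]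
  have f2 : Vᴴ * Adag * A = Vᴴ := by
    rw [hVH, Matrix.mul_assoc, Matrix.mul_assoc, ← Matrix.mul_assoc A Adag A, hA1]
  have f3 : S * Sdag * Vᴴ = Vᴴ := by rw [hW1, ← Matrix.mul_assoc, hS1]
  have fSSH : Sdag * S * Sᴴ = Sᴴ := by
    conv_lhs => rw [← hS4]
    rw [← conjTranspose_mul, ← Matrix.mul_assoc, hS1]
  have f4 : Sdag * S * Vᴴ = Vᴴ := by rw [hW2, ← Matrix.mul_assoc, fSSH]
  -- generalized forms
  have g1 : ∀ {p : Type} [Fintype p] (X : Matrix (Fin r) p ℂ),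
      A * (Adag * (U * X)) = U * X := by
    intro p _ X
    rw [← Matrix.mul_assoc, ← Matrix.mul_assoc, f1]
  have g2 : ∀ {p : Type} [Fintype p] (X : Matrix (Fin r) p ℂ),
      Vᴴ * (Adag * (U * X)) = S * X - X := by
    intro p _ X
    rw [← Matrix.mul_assoc, ← Matrix.mul_assoc, hS, Matrix.add_mul, Matrix.one_mul,
      add_sub_cancel_left]
  have g3 : ∀ {p : Type} [Fintype p] (X : Matrix (Fin n) p ℂ),
      S * (Sdag * (Vᴴ * X)) = Vᴴ * X := by
    intro p _ X
    rw [← Matrix.mul_assoc, ← Matrix.mul_assoc, f3]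
  -- key identities
  set Z : Matrix (Fin n) (Fin m) ℂ := Adag - Adag * U * Sdag * Vᴴ * Adag with hZ
  have hBZ : (A + U * Vᴴ) * Z = A * Adag := by
    rw [hZ]
    simp only [Matrix.mul_sub, Matrix.sub_mul, Matrix.add_mul, Matrix.mul_assoc]
    rw [g1, g2, g3, Matrix.mul_sub]
    abel
  have hZB : Z * (A + U * Vᴴ) = Adag * A := by
    rw [hZ]
    simp only [Matrix.mul_sub, Matrix.sub_mul, Matrix.mul_add, Matrix.add_mul,
      Matrix.mul_assoc]
    rw [← Matrix.mul_assoc Vᴴ Adag A, f2, g2]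
    simp only [Matrix.mul_sub]
    rw [← Matrix.mul_assoc Sdag S Vᴴ, f4]
    abel
  refine ⟨?_, ?_, ?_, ?_⟩
  · rw [hBZ, Matrix.mul_add, ← Matrix.mul_assoc, hA1, f1]
  · rw [hZB, hZ]
    simp only [Matrix.mul_sub, Matrix.sub_mul, Matrix.mul_assoc]
    rw [← Matrix.mul_assoc Adag A Adag, hA2, g1]
  · rw [hBZ, hA3]
  · rw [hZB, hA4]
end

section
/- Let A ∈ ℂ^{m×n}, U ∈ ℂ^{m×r}, V ∈ ℂ^{n×r}. If R(U) ⊆ R(A), R(V) ⊆ R(A*), and S_A = I + V*A†U is invertible, then (A + UV*)† = A† − A†U (I + V*A†U)^{-1} V*A†. -/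
open Matrix

theorem stmt_6 {m n r : ℕ}
    (A : Matrix (Fin m) (Fin n) ℂ) (U : Matrix (Fin m) (Fin r) ℂ)
    (V : Matrix (Fin n) (Fin r) ℂ)
    (Adag : Matrix (Fin n) (Fin m) ℂ) (hAdag : IsMP A Adag)
    (S : Matrix (Fin r) (Fin r) ℂ) (hS : S = 1 + Vᴴ * Adag * U)
    (hU : LinearMap.range U.mulVecLin ≤ LinearMap.range A.mulVecLin)
    (hV : LinearMap.range V.mulVecLin ≤ LinearMap.range Aᴴ.mulVecLin)
    (hSinv : IsUnit S) :
    IsMP (A + U * Vᴴ) (Adag - Adag * U * (1 + Vᴴ * Adag * U)⁻¹ * Vᴴ * Adag) := by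
  obtain ⟨h1, h2, h3, h4⟩ := hAdag
  -- A * Adag acts as identity on range of A, hence on U
  have hAU : A * Adag * U = U := by
    have hvec : ∀ x : Fin r → ℂ, (A * Adag * U).mulVec x = U.mulVec x := by
      intro x
      obtain ⟨y, hy⟩ := hU (LinearMap.mem_range.2 ⟨x, rfl⟩)
      simp only [Matrix.mulVecLin_apply] at hy
      calc (A * Adag * U).mulVec x = (A * Adag).mulVec (U.mulVec x) := by
            rw [Matrix.mulVec_mulVec]
        _ = (A * Adag).mulVec (A.mulVec y) := by rw [hy]
        _ = (A * Adag * A).mulVec y := by rw [Matrix.mulVec_mulVec]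
        _ = A.mulVec y := by rw [h1]
        _ = U.mulVec x := hy
    ext i j
    have := congrFun (hvec (Pi.single j 1)) i
    simpa [Matrix.mulVec_single] using this
  have hAAH : Adag * A * Aᴴ = Aᴴ := by
    calc Adag * A * Aᴴ = (Adag * A)ᴴ * Aᴴ := by rw [h4]
      _ = (A * (Adag * A))ᴴ := (Matrix.conjTranspose_mul A (Adag * A)).symm
      _ = Aᴴ := by rw [← Matrix.mul_assoc, h1]
  have hQV : Adag * A * V = V := by
    have hvec : ∀ x : Fin r → ℂ, (Adag * A * V).mulVec x = V.mulVec x := by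
      intro x
      obtain ⟨y, hy⟩ := hV (LinearMap.mem_range.2 ⟨x, rfl⟩)
      simp only [Matrix.mulVecLin_apply] at hy
      calc (Adag * A * V).mulVec x = (Adag * A).mulVec (V.mulVec x) := by
            rw [Matrix.mulVec_mulVec]
        _ = (Adag * A).mulVec (Aᴴ.mulVec y) := by rw [hy]
        _ = (Adag * A * Aᴴ).mulVec y := by rw [Matrix.mulVec_mulVec]
        _ = Aᴴ.mulVec y := by rw [hAAH]
        _ = V.mulVec x := hy
    ext i j
    have := congrFun (hvec (Pi.single j 1)) i
    simpa [Matrix.mulVec_single] using this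
  have hVA : Vᴴ * (Adag * A) = Vᴴ := by
    have h := congrArg Matrix.conjTranspose hQV
    rw [Matrix.conjTranspose_mul, h4] at h
    exact h
  have hAU' : A * (Adag * U) = U := by rw [← Matrix.mul_assoc]; exact hAU
  have hdet : IsUnit S.det := (Matrix.isUnit_iff_isUnit_det S).mp hSinv
  have hS1 : S * S⁻¹ = 1 := Matrix.mul_nonsing_inv S hdet
  have hS2 : S⁻¹ * S = 1 := Matrix.nonsing_inv_mul S hdet
  have hkey1 : (A + U * Vᴴ) * (Adag * U) = U * S := by
    simp only [Matrix.add_mul, Matrix.mul_add, Matrix.mul_one, Matrix.mul_assoc, hS, hAU']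
  have hkey2 : (Vᴴ * Adag) * (A + U * Vᴴ) = S * Vᴴ := by
    simp only [Matrix.mul_add, Matrix.add_mul, hS, Matrix.one_mul, Matrix.mul_assoc, hVA]
  have hBZ : (A + U * Vᴴ) * (Adag - Adag * U * S⁻¹ * Vᴴ * Adag) = A * Adag := by
    have e1 : (A + U * Vᴴ) * (Adag * U * S⁻¹ * Vᴴ * Adag)
        = ((A + U * Vᴴ) * (Adag * U)) * (S⁻¹ * (Vᴴ * Adag)) := by
      simp only [Matrix.mul_assoc]
    rw [Matrix.mul_sub, e1, hkey1, Matrix.mul_assoc U S, ← Matrix.mul_assoc S, hS1,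
      Matrix.one_mul, Matrix.add_mul, Matrix.mul_assoc, add_sub_cancel_right]
  have hZB : (Adag - Adag * U * S⁻¹ * Vᴴ * Adag) * (A + U * Vᴴ) = Adag * A := by
    have e1 : (Adag * U * S⁻¹ * Vᴴ * Adag) * (A + U * Vᴴ)
        = (Adag * U * S⁻¹) * ((Vᴴ * Adag) * (A + U * Vᴴ)) := by
      simp only [Matrix.mul_assoc]
    rw [Matrix.sub_mul, e1, hkey2, ← Matrix.mul_assoc (Adag * U * S⁻¹) S Vᴴ,
      Matrix.mul_assoc (Adag * U) S⁻¹ S, hS2, Matrix.mul_one, Matrix.mul_add,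
      ← Matrix.mul_assoc, add_sub_cancel_right]
  rw [← hS]
  refine ⟨?_, ?_, ?_, ?_⟩
  · rw [hBZ, Matrix.mul_add, h1, ← Matrix.mul_assoc, hAU]
  · rw [hZB]
    have e : (Adag * A) * (Adag * U * S⁻¹ * Vᴴ * Adag)
        = (Adag * A * Adag) * (U * (S⁻¹ * (Vᴴ * Adag))) := by
      simp only [Matrix.mul_assoc]
    rw [Matrix.mul_sub, h2, e, h2]
    simp only [Matrix.mul_assoc]
  · rw [hBZ]; exact h3
  · rw [hZB]; exact h4
end

section
/- Let A ∈ ℂ^{m×n}, U ∈ ℂ^{m×r}, V ∈ ℂ^{n×r}, and S_A = I + V*A†U. If R(U) ⊆ R(A) and R(U*) ⊆ R(S_A), then (A + UV*)(A† − A†U S_A† V*A†) = AA†. -/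
open Matrix

lemma range_fact {m n p : Type*} [Fintype m] [Fintype n] [Fintype p] [DecidableEq p]
    (A : Matrix m n ℂ) (Z : Matrix n m ℂ) (B : Matrix m p ℂ)
    (hA : A * Z * A = A)
    (h : LinearMap.range B.mulVecLin ≤ LinearMap.range A.mulVecLin) :
    A * Z * B = B := by
  ext i j
  obtain ⟨x, hx⟩ := h ⟨Pi.single j 1, rfl⟩
  simp only [mulVecLin_apply] at hx
  have hcol : (A * Z * B) *ᵥ Pi.single j 1 = B *ᵥ Pi.single j 1 := by
    calc (A * Z * B) *ᵥ Pi.single j 1 = (A * Z) *ᵥ (B *ᵥ Pi.single j 1) := by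
          rw [← mulVec_mulVec]
      _ = (A * Z) *ᵥ (A *ᵥ x) := by rw [hx]
      _ = (A * Z * A) *ᵥ x := by rw [mulVec_mulVec]
      _ = A *ᵥ x := by rw [hA]
      _ = B *ᵥ Pi.single j 1 := hx
  have := congrFun hcol i
  simpa [mulVec_single] using this

theorem stmt_12 {m n r : ℕ}
    (A : Matrix (Fin m) (Fin n) ℂ) (U : Matrix (Fin m) (Fin r) ℂ)
    (V : Matrix (Fin n) (Fin r) ℂ)
    (Adag : Matrix (Fin n) (Fin m) ℂ) (hAdag : IsMP A Adag)
    (S : Matrix (Fin r) (Fin r) ℂ) (hS : S = 1 + Vᴴ * Adag * U)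
    (Sdag : Matrix (Fin r) (Fin r) ℂ) (hSdag : IsMP S Sdag)
    (hU : LinearMap.range U.mulVecLin ≤ LinearMap.range A.mulVecLin)
    (hUs : LinearMap.range Uᴴ.mulVecLin ≤ LinearMap.range S.mulVecLin) :
    (A + U * Vᴴ) * (Adag - Adag * U * Sdag * Vᴴ * Adag) = A * Adag := by
  obtain ⟨hA1, -, -, -⟩ := hAdag
  obtain ⟨hS1, -, hS3, -⟩ := hSdag
  have e1 : A * Adag * U = U := range_fact A Adag U hA1 hU
  have colUs : S * Sdag * Uᴴ = Uᴴ := range_fact S Sdag Uᴴ hS1 hUs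
  have e2 : U * S * Sdag = U := by
    have h := congrArg conjTranspose colUs
    rw [conjTranspose_mul, conjTranspose_conjTranspose, hS3] at h
    rw [Matrix.mul_assoc]
    exact h
  have e3 : Vᴴ * Adag * U = S - 1 := by rw [hS]; abel
  have e3' : U * Vᴴ * Adag * U = U * S - U := by
    rw [Matrix.mul_assoc, Matrix.mul_assoc, ← Matrix.mul_assoc Vᴴ, e3,
      Matrix.mul_sub, Matrix.mul_one]
  simp only [Matrix.add_mul, Matrix.mul_sub, ← Matrix.mul_assoc]
  rw [e1, e3']
  simp only [Matrix.sub_mul, e2]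
  abel
end

section
/- Let A ∈ ℂ^{m×n}, U ∈ ℂ^{m×r}, V ∈ ℂ^{n×r}, and S_A = I + V*A†U. If R(V) ⊆ R(A*) and R(V*) ⊆ R(S_A*), then (A† − A†U S_A† V*A†)(A + UV*) = A†A. -/
open Matrix

lemma proj_of_range_le {a b c : ℕ} (P : Matrix (Fin a) (Fin a) ℂ)
    (B : Matrix (Fin a) (Fin b) ℂ) (C : Matrix (Fin a) (Fin c) ℂ)
    (hPC : P * C = C) (h : LinearMap.range B.mulVecLin ≤ LinearMap.range C.mulVecLin) :
    P * B = B := by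
  ext i j
  obtain ⟨x, hx⟩ := h ⟨Pi.single j 1, rfl⟩
  have hx' : B.mulVec (Pi.single j 1) = C.mulVec x := by
    simpa [Matrix.mulVecLin_apply] using hx.symm
  have key : (P * B).mulVec (Pi.single j 1) = B.mulVec (Pi.single j 1) := by
    rw [← Matrix.mulVec_mulVec, hx', Matrix.mulVec_mulVec, hPC]
  have := congrFun key i
  simpa using this

theorem stmt_13 {m n r : ℕ}
    (A : Matrix (Fin m) (Fin n) ℂ) (U : Matrix (Fin m) (Fin r) ℂ)
    (V : Matrix (Fin n) (Fin r) ℂ)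
    (Adag : Matrix (Fin n) (Fin m) ℂ) (hAdag : IsMP A Adag)
    (S : Matrix (Fin r) (Fin r) ℂ) (hS : S = 1 + Vᴴ * Adag * U)
    (Sdag : Matrix (Fin r) (Fin r) ℂ) (hSdag : IsMP S Sdag)
    (hV : LinearMap.range V.mulVecLin ≤ LinearMap.range Aᴴ.mulVecLin)
    (hVs : LinearMap.range Vᴴ.mulVecLin ≤ LinearMap.range Sᴴ.mulVecLin) :
    (Adag - Adag * U * Sdag * Vᴴ * Adag) * (A + U * Vᴴ) = Adag * A := by
  obtain ⟨hA1, hA2, hA3, hA4⟩ := hAdag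
  obtain ⟨hS1, hS2, hS3, hS4⟩ := hSdag
  have hPA : (Adag * A) * Aᴴ = Aᴴ := by
    calc (Adag * A) * Aᴴ = (Adag * A)ᴴ * Aᴴ := by rw [hA4]
    _ = (A * (Adag * A))ᴴ := by
        simp [Matrix.conjTranspose_mul, Matrix.mul_assoc]
    _ = Aᴴ := by rw [← Matrix.mul_assoc, hA1]
  have hPV : (Adag * A) * V = V := proj_of_range_le _ _ _ hPA hV
  have e1 : Vᴴ * (Adag * A) = Vᴴ := by
    have := congrArg Matrix.conjTranspose hPV
    rwa [Matrix.conjTranspose_mul, hA4] at this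
  have hPS : (Sdag * S) * Sᴴ = Sᴴ := by
    calc (Sdag * S) * Sᴴ = (Sdag * S)ᴴ * Sᴴ := by rw [hS4]
    _ = (S * (Sdag * S))ᴴ := by
        simp [Matrix.conjTranspose_mul, Matrix.mul_assoc]
    _ = Sᴴ := by rw [← Matrix.mul_assoc, hS1]
  have e2 : (Sdag * S) * Vᴴ = Vᴴ := proj_of_range_le _ _ _ hPS hVs
  have e3 : Vᴴ * Adag * U = S - 1 := by
    rw [hS]; rw [add_sub_cancel_left]
  have f2 : Sdag * (S * Vᴴ) = Vᴴ := by rw [← Matrix.mul_assoc, e2]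
  have f3 : Vᴴ * (Adag * (U * Vᴴ)) = S * Vᴴ - Vᴴ := by
    rw [← Matrix.mul_assoc, ← Matrix.mul_assoc, e3, Matrix.sub_mul, Matrix.one_mul]
  rw [Matrix.sub_mul, Matrix.mul_add, Matrix.mul_add]
  simp only [Matrix.mul_assoc]
  rw [e1, f3, Matrix.mul_sub, f2]
  simp only [Matrix.mul_sub]
  abel
end

section
/- Let A ∈ ℂ^{m×n}, U ∈ ℂ^{m×r}, V ∈ ℂ^{n×r}, and S_A = I + V*A†U. Assume R(U) ⊆ R(A) and R(V) ⊆ R(A*), and let Â = (I + A†U F_{S_A} U*(A†)*)^{-1} (A† − A†U S_A† V*A†) (I + (A†)* V E_{S_A} V*A†)^{-1}. Then Â (A + UV*) Â = Â if and only if A†U F_{S_A} E_{S_A} V*A† = 0. -/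
open Matrix

open scoped ComplexOrder in
/-- `1 + M Mᴴ` is invertible. -/
lemma aux_isUnit_one_add {a b : ℕ} (M : Matrix (Fin a) (Fin b) ℂ) :
    IsUnit (1 + M * Mᴴ) :=
  (Matrix.PosDef.add_posSemidef Matrix.PosDef.one
    (Matrix.posSemidef_self_mul_conjTranspose M)).isUnit

theorem stmt_14 {m n r : ℕ}
    (A : Matrix (Fin m) (Fin n) ℂ) (U : Matrix (Fin m) (Fin r) ℂ)
    (V : Matrix (Fin n) (Fin r) ℂ)
    (Adag : Matrix (Fin n) (Fin m) ℂ) (hAdag : IsMP A Adag)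
    (S : Matrix (Fin r) (Fin r) ℂ) (hS : S = 1 + Vᴴ * Adag * U)
    (Sdag : Matrix (Fin r) (Fin r) ℂ) (hSdag : IsMP S Sdag)
    (ES : Matrix (Fin r) (Fin r) ℂ) (hES : ES = 1 - S * Sdag)
    (FS : Matrix (Fin r) (Fin r) ℂ) (hFS : FS = 1 - Sdag * S)
    (hU : LinearMap.range U.mulVecLin ≤ LinearMap.range A.mulVecLin)
    (hV : LinearMap.range V.mulVecLin ≤ LinearMap.range Aᴴ.mulVecLin)
    (Ahat : Matrix (Fin n) (Fin m) ℂ)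
    (hAhat : Ahat = (1 + Adag * U * FS * Uᴴ * Adagᴴ)⁻¹ *
      (Adag - Adag * U * Sdag * Vᴴ * Adag) *
      (1 + Adagᴴ * V * ES * Vᴴ * Adag)⁻¹) :
    Ahat * (A + U * Vᴴ) * Ahat = Ahat ↔ Adag * U * FS * ES * Vᴴ * Adag = 0 := by
  obtain ⟨hA1, hA2, hA3, hA4⟩ := hAdag
  obtain ⟨hS1, hS2, hS3, hS4⟩ := hSdag
  -- range condition on V gives `Adag * A * V = V`
  have hAAAh : Adag * A * Aᴴ = Aᴴ := by
    have e1 : (A * (Adag * A))ᴴ = Aᴴ := by rw [← Matrix.mul_assoc, hA1]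
    calc Adag * A * Aᴴ = (Adag * A)ᴴ * Aᴴ := by rw [hA4]
      _ = (A * (Adag * A))ᴴ := (conjTranspose_mul _ _).symm
      _ = Aᴴ := e1
  have h2 : Adag * A * V = V := by
    ext i j
    obtain ⟨z, hz⟩ := hV (LinearMap.mem_range_self V.mulVecLin (Pi.single j 1))
    have hz' : Aᴴ *ᵥ z = V *ᵥ Pi.single j 1 := hz
    have hcol : (Adag * A * V) *ᵥ Pi.single j 1 = V *ᵥ Pi.single j 1 := by
      calc (Adag * A * V) *ᵥ Pi.single j 1
          = (Adag * A) *ᵥ (V *ᵥ Pi.single j 1) := by rw [← mulVec_mulVec]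
        _ = (Adag * A) *ᵥ (Aᴴ *ᵥ z) := by rw [hz']
        _ = (Adag * A * Aᴴ) *ᵥ z := by rw [mulVec_mulVec]
        _ = Aᴴ *ᵥ z := by rw [hAAAh]
        _ = V *ᵥ Pi.single j 1 := hz'
    have := congrFun hcol i
    simpa [Matrix.mulVec_single_one] using this
  have h2' : Vᴴ * (Adag * A) = Vᴴ := by
    have h := congrArg conjTranspose h2
    rw [conjTranspose_mul, hA4] at h
    exact h
  -- basic consequences of the MP axioms for S
  have hVAU : Vᴴ * Adag * U = S - 1 := by rw [hS]; abel
  have hESS0 : ES * S = 0 := by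
    rw [hES, sub_mul, one_mul, mul_assoc, ← mul_assoc S Sdag S, hS1, sub_self]
  have hSFS0 : S * FS = 0 := by
    rw [hFS, mul_sub, mul_one, ← mul_assoc, hS1, sub_self]
  have hFSd0 : FS * Sdag = 0 := by
    rw [hFS, sub_mul, one_mul, mul_assoc, ← mul_assoc Sdag S Sdag, hS2, sub_self]
  have hFF0 : FS * FS = FS := by
    nth_rewrite 2 [hFS]
    rw [mul_sub, mul_one, ← mul_assoc, hFSd0, zero_mul, sub_zero]
  have hEE0 : ES * ES = ES := by
    nth_rewrite 2 [hES]
    rw [mul_sub, mul_one, ← mul_assoc, hESS0, zero_mul, sub_zero]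
  have hFSh : FSᴴ = FS := by
    rw [hFS, conjTranspose_sub, conjTranspose_one, hS4]
  have hESh : ESᴴ = ES := by
    rw [hES, conjTranspose_sub, conjTranspose_one, hS3]
  -- parametric rewrite rules (right-associated)
  have r1 : ∀ {p : Type} (X : Matrix (Fin r) p ℂ),
      Vᴴ * (Adag * (U * X)) = S * X - X := by
    intro p X
    rw [← Matrix.mul_assoc, ← Matrix.mul_assoc, hVAU, Matrix.sub_mul,
      Matrix.one_mul]
  have r2' : Vᴴ * (Adag * A) = Vᴴ := h2'
  have rAA : ∀ {p : Type} (X : Matrix (Fin m) p ℂ),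
      Adag * (A * (Adag * X)) = Adag * X := by
    intro p X
    rw [← Matrix.mul_assoc, ← Matrix.mul_assoc, hA2]
  have rAA' : Adag * (A * Adag) = Adag := by rw [← Matrix.mul_assoc, hA2]
  have rES : ∀ {p : Type} (X : Matrix (Fin r) p ℂ), ES * (S * X) = 0 := by
    intro p X; rw [← Matrix.mul_assoc, hESS0, Matrix.zero_mul]
  have rSF : ∀ {p : Type} (X : Matrix (Fin r) p ℂ), S * (FS * X) = 0 := by
    intro p X; rw [← Matrix.mul_assoc, hSFS0, Matrix.zero_mul]
  have rFSd : ∀ {p : Type} (X : Matrix (Fin r) p ℂ), FS * (Sdag * X) = 0 := by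
    intro p X; rw [← Matrix.mul_assoc, hFSd0, Matrix.zero_mul]
  have rFF : ∀ {p : Type} (X : Matrix (Fin r) p ℂ), FS * (FS * X) = FS * X := by
    intro p X; rw [← Matrix.mul_assoc, hFF0]
  have rSdS : ∀ {p : Type} (X : Matrix (Fin r) p ℂ),
      S * (Sdag * X) = X - ES * X := by
    intro p X
    have hSSd : S * Sdag = 1 - ES := by rw [hES]; abel
    rw [← Matrix.mul_assoc, hSSd, Matrix.sub_mul, Matrix.one_mul]
  -- abbreviations
  set P := 1 + Adag * U * FS * Uᴴ * Adagᴴ with hPdef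
  set Q := 1 + Adagᴴ * V * ES * Vᴴ * Adag with hQdef
  set G := Adag - Adag * U * Sdag * Vᴴ * Adag with hGdef
  set B := A + U * Vᴴ with hBdef
  -- invertibility of P and Q
  have hPunit : IsUnit P := by
    have hP2 : P = 1 + (Adag * U * FS) * (Adag * U * FS)ᴴ := by
      rw [hPdef]
      simp only [conjTranspose_mul, hFSh, Matrix.mul_assoc]
      rw [rFF]
    rw [hP2]; exact aux_isUnit_one_add _
  have hQunit : IsUnit Q := by
    have hQ2 : Q = 1 + (Adagᴴ * V * ES) * (Adagᴴ * V * ES)ᴴ := by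
      rw [hQdef]
      simp only [conjTranspose_mul, conjTranspose_conjTranspose, hESh,
        Matrix.mul_assoc]
      have rEE : ES * (ES * (Vᴴ * Adag)) = ES * (Vᴴ * Adag) := by
        rw [← Matrix.mul_assoc, hEE0]
      rw [rEE]
    rw [hQ2]; exact aux_isUnit_one_add _
  have hPd : IsUnit P.det := (Matrix.isUnit_iff_isUnit_det P).mp hPunit
  have hQd : IsUnit Q.det := (Matrix.isUnit_iff_isUnit_det Q).mp hQunit
  have hPPi : P * P⁻¹ = 1 := Matrix.mul_nonsing_inv P hPd
  have hPiP : P⁻¹ * P = 1 := Matrix.nonsing_inv_mul P hPd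
  have hQQi : Q * Q⁻¹ = 1 := Matrix.mul_nonsing_inv Q hQd
  have hQiQ : Q⁻¹ * Q = 1 := Matrix.nonsing_inv_mul Q hQd
  -- the key algebraic identities
  have hQB : Q * B = B := by
    rw [hQdef, hBdef]
    simp only [Matrix.add_mul, Matrix.mul_add, Matrix.one_mul, Matrix.mul_one,
      Matrix.mul_assoc, r2', r1, Matrix.mul_sub, rES, zero_sub, Matrix.mul_neg,
      Matrix.mul_zero]
    abel
  have hGB : G * B = Adag * A + Adag * (U * (FS * Vᴴ)) := by
    rw [hGdef, hBdef, hFS]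
    simp only [Matrix.sub_mul, Matrix.mul_sub, Matrix.add_mul, Matrix.mul_add,
      Matrix.one_mul, Matrix.mul_one, Matrix.mul_assoc, r2', r1]
    abel
  have hGBP : G * B * P = G * B := by
    rw [hGB, hPdef]
    simp only [Matrix.add_mul, Matrix.mul_add, Matrix.mul_one, Matrix.one_mul,
      Matrix.mul_assoc, rAA, r1, Matrix.mul_sub, rSF, rFF, Matrix.mul_zero,
      zero_sub, Matrix.mul_neg]
    abel
  have hGBG : G * B * G = G + Adag * (U * (FS * (ES * (Vᴴ * Adag)))) := by
    rw [hGB, hGdef]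
    simp only [Matrix.mul_sub, Matrix.sub_mul, Matrix.mul_add, Matrix.add_mul,
      Matrix.mul_one, Matrix.one_mul, Matrix.mul_assoc, rAA, rAA', r1, rSdS,
      rFSd, Matrix.mul_zero, sub_zero, zero_sub, Matrix.mul_neg, neg_neg]
    abel
  have hX0 : Adag * U * FS * ES * Vᴴ * Adag
      = Adag * (U * (FS * (ES * (Vᴴ * Adag)))) := by
    simp only [Matrix.mul_assoc]
  -- consequences with inverses
  have hQiB : Q⁻¹ * B = B := by
    calc Q⁻¹ * B = Q⁻¹ * (Q * B) := by rw [hQB]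
      _ = Q⁻¹ * Q * B := by rw [Matrix.mul_assoc]
      _ = B := by rw [hQiQ, Matrix.one_mul]
  have hGBPi : G * B * P⁻¹ = G * B := by
    calc G * B * P⁻¹ = G * B * P * P⁻¹ := by rw [hGBP]
      _ = G * B * (P * P⁻¹) := by rw [Matrix.mul_assoc]
      _ = G * B := by rw [hPPi, Matrix.mul_one]
  -- the master identity
  have key : Ahat * B * Ahat
      = Ahat + P⁻¹ * (Adag * U * FS * ES * Vᴴ * Adag) * Q⁻¹ := by
    rw [hAhat, hX0]
    calc P⁻¹ * G * Q⁻¹ * B * (P⁻¹ * G * Q⁻¹)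
        = P⁻¹ * G * (Q⁻¹ * B) * (P⁻¹ * G * Q⁻¹) := by
          rw [Matrix.mul_assoc (P⁻¹ * G)]
      _ = P⁻¹ * G * B * (P⁻¹ * G * Q⁻¹) := by rw [hQiB]
      _ = P⁻¹ * (G * B) * (P⁻¹ * G * Q⁻¹) := by rw [Matrix.mul_assoc P⁻¹ G B]
      _ = P⁻¹ * (G * B * (P⁻¹ * G * Q⁻¹)) := by rw [Matrix.mul_assoc]
      _ = P⁻¹ * (G * B * (P⁻¹ * (G * Q⁻¹))) := by
          rw [Matrix.mul_assoc P⁻¹ G Q⁻¹]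
      _ = P⁻¹ * (G * B * P⁻¹ * (G * Q⁻¹)) := by
          rw [← Matrix.mul_assoc (G * B)]
      _ = P⁻¹ * (G * B * (G * Q⁻¹)) := by rw [hGBPi]
      _ = P⁻¹ * (G * B * G * Q⁻¹) := by rw [← Matrix.mul_assoc (G * B)]
      _ = P⁻¹ * ((G + Adag * (U * (FS * (ES * (Vᴴ * Adag))))) * Q⁻¹) := by
          rw [hGBG]
      _ = P⁻¹ * G * Q⁻¹
          + P⁻¹ * (Adag * (U * (FS * (ES * (Vᴴ * Adag))))) * Q⁻¹ := by
          rw [Matrix.add_mul, Matrix.mul_add, ← Matrix.mul_assoc,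
            ← Matrix.mul_assoc]
  constructor
  · intro h
    have h0 : P⁻¹ * (Adag * U * FS * ES * Vᴴ * Adag) * Q⁻¹ = 0 := by
      have hk := key
      rw [h] at hk
      exact (left_eq_add.mp hk)
    have hrec : P * (P⁻¹ * (Adag * U * FS * ES * Vᴴ * Adag) * Q⁻¹) * Q
        = Adag * U * FS * ES * Vᴴ * Adag := by
      calc P * (P⁻¹ * (Adag * U * FS * ES * Vᴴ * Adag) * Q⁻¹) * Q
          = P * (P⁻¹ * ((Adag * U * FS * ES * Vᴴ * Adag) * Q⁻¹)) * Q := by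
            rw [Matrix.mul_assoc P⁻¹]
        _ = P * P⁻¹ * ((Adag * U * FS * ES * Vᴴ * Adag) * Q⁻¹) * Q := by
            rw [← Matrix.mul_assoc P P⁻¹]
        _ = (Adag * U * FS * ES * Vᴴ * Adag) * Q⁻¹ * Q := by
            rw [hPPi, Matrix.one_mul]
        _ = (Adag * U * FS * ES * Vᴴ * Adag) * (Q⁻¹ * Q) := by
            rw [Matrix.mul_assoc]
        _ = Adag * U * FS * ES * Vᴴ * Adag := by rw [hQiQ, Matrix.mul_one]
    rw [← hrec, h0, Matrix.mul_zero, Matrix.zero_mul]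
  · intro h
    rw [key, h, Matrix.mul_zero, Matrix.zero_mul, add_zero]
end

section
/- Let H₁, H₂, H₃ be complex Hilbert spaces and let A : H₁ → H₂, U : H₃ → H₂, V : H₃ → H₁ be bounded linear operators. Assume the ranges R(A) and R(S_A) are closed, where S_A = I + V*A†U. If R(U) ⊆ R(A), R(V) ⊆ R(A*), R(U*) ⊆ R(S_A), and R(V*) ⊆ R(S_A*), then R(A + UV*) is closed and (A + UV*)† = (I + A†U F_{S_A} U*(A†)*)^{-1} (A† − A†U S_A† V*A†) (I + (A†)* V E_{S_A} V*A†)^{-1}. -/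
/-!
Under the range inclusions the Schur complement `S = I + V* A† U` is invertible with inverse
`S†`: if `S x = 0` then `V x = V S† S x = 0`, so `x = -V* A† U x` is orthogonal to itself, and
the same argument applies to `S* = I + U* (A†)* V`. Hence `F_S = E_S = 0`, both outer factors
of the formula are the identity, and what remains is the Sherman–Morrison–Woodbury identity:
with `B = A + U V*` and `G = A† - A† U S⁻¹ V* A†` one has `B G = A A†` and `G B = A† A`, from
which the Penrose equations for `(B, G)` follow from those for `(A, A†)`. The range of `B` is
closed because it is the range of the idempotent `B G`.
-/

open ContinuousLinearMap

/-- `Z` is the Moore–Penrose inverse of the bounded linear operator `A`. -/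
def IsMPOp {E F : Type*}
    [NormedAddCommGroup E] [InnerProductSpace ℂ E] [CompleteSpace E]
    [NormedAddCommGroup F] [InnerProductSpace ℂ F] [CompleteSpace F]
    (A : E →L[ℂ] F) (Z : F →L[ℂ] E) : Prop :=
  A ∘L Z ∘L A = A ∧ Z ∘L A ∘L Z = Z ∧
    adjoint (A ∘L Z) = A ∘L Z ∧ adjoint (Z ∘L A) = Z ∘L A

section Woodbury

variable {𝕜 E F G : Type*} [NontriviallyNormedField 𝕜]
  [NormedAddCommGroup E] [NormedSpace 𝕜 E] [NormedAddCommGroup F] [NormedSpace 𝕜 F]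
  [NormedAddCommGroup G] [NormedSpace 𝕜 G]
  {A : E →L[𝕜] F} {Z : F →L[𝕜] E} {U : G →L[𝕜] F} {Y : E →L[𝕜] G}
  {T : G →L[𝕜] G}

theorem ContinuousLinearMap.comp_eq_self_of_range_le {P : F →L[𝕜] F} {B : E →L[𝕜] F}
    {C : G →L[𝕜] F} (hPB : P ∘L B = B)
    (h : LinearMap.range (C : G →ₗ[𝕜] F) ≤ LinearMap.range (B : E →ₗ[𝕜] F)) :
    P ∘L C = C := by
  ext x
  obtain ⟨y, hy⟩ := h ⟨x, rfl⟩
  simp only [coe_coe] at hy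
  simpa [← hy] using DFunLike.congr_fun hPB y

theorem add_comp_woodbury (hU : A ∘L Z ∘L U = U)
    (hT : (1 + Y ∘L Z ∘L U) ∘L T = 1) :
    (A + U ∘L Y) ∘L (Z - Z ∘L U ∘L T ∘L Y ∘L Z) = A ∘L Z := by
  have hT' : U ∘L Y ∘L Z ∘L U ∘L T = U - U ∘L T := by
    have := congr(U ∘L $hT)
    rw [add_comp, comp_add, one_def, id_comp, comp_id] at this
    rw [eq_sub_iff_add_eq, add_comm]
    simpa only [comp_assoc] using this
  simp only [add_comp, comp_sub, ← comp_assoc] at hU hT' ⊢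
  rw [hU, hT']
  simp only [sub_comp]
  abel

theorem woodbury_comp_add (hY : Y ∘L Z ∘L A = Y)
    (hT : T ∘L (1 + Y ∘L Z ∘L U) = 1) :
    (Z - Z ∘L U ∘L T ∘L Y ∘L Z) ∘L (A + U ∘L Y) = Z ∘L A := by
  have hT' : T ∘L Y ∘L Z ∘L U ∘L Y = Y - T ∘L Y := by
    have := congr($hT ∘L Y)
    rw [comp_add, add_comp, one_def, id_comp, comp_id] at this
    rw [eq_sub_iff_add_eq, add_comm]
    simpa only [comp_assoc] using this
  simp only [sub_comp, comp_add, comp_assoc] at hY hT' ⊢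
  rw [hY, hT']
  simp only [comp_sub]
  abel

end Woodbury

theorem injective_one_add_adjoint_comp {E G : Type*}
    [NormedAddCommGroup E] [InnerProductSpace ℂ E] [CompleteSpace E]
    [NormedAddCommGroup G] [InnerProductSpace ℂ G] [CompleteSpace G]
    {V W C : G →L[ℂ] E} (hC : C ∘L (1 + adjoint V ∘L W) = V) :
    Function.Injective (1 + adjoint V ∘L W : G →L[ℂ] G) := by
  rw [injective_iff_map_eq_zero]
  intro x hx
  have hVx : V x = 0 := by rw [← hC, comp_apply, hx, map_zero]
  have hx' : x = -adjoint V (W x) := eq_neg_of_add_eq_zero_left hx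
  rw [← inner_self_eq_zero (𝕜 := ℂ)]
  nth_rewrite 1 [hx']
  rw [inner_neg_left, adjoint_inner_left, hVx, inner_zero_right, neg_zero]

namespace IsMPOp

variable {E F G : Type*}
  [NormedAddCommGroup E] [InnerProductSpace ℂ E] [CompleteSpace E]
  [NormedAddCommGroup F] [InnerProductSpace ℂ F] [CompleteSpace F]
  [NormedAddCommGroup G] {A : E →L[ℂ] F} {Z : F →L[ℂ] E}

theorem adjoint (h : IsMPOp A Z) : IsMPOp (adjoint A) (adjoint Z) := by
  obtain ⟨h₁, h₂, h₃, h₄⟩ := h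
  refine ⟨?_, ?_, ?_, ?_⟩
  · rw [← adjoint_comp, ← adjoint_comp, comp_assoc, h₁]
  · rw [← adjoint_comp, ← adjoint_comp, comp_assoc, h₂]
  · rw [← adjoint_comp, adjoint_adjoint, h₄]
  · rw [← adjoint_comp, adjoint_adjoint, h₃]

theorem comp_comp_of_range_le [NormedSpace ℂ G] (h : IsMPOp A Z) {C : G →L[ℂ] F}
    (hC : LinearMap.range (C : G →ₗ[ℂ] F) ≤ LinearMap.range (A : E →ₗ[ℂ] F)) :
    A ∘L Z ∘L C = C := by
  rw [← comp_assoc]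
  exact comp_eq_self_of_range_le (by rw [comp_assoc, h.1]) hC

theorem adjoint_comp_comp_of_range_le [InnerProductSpace ℂ G] [CompleteSpace G]
    (h : IsMPOp A Z) {C : G →L[ℂ] F}
    (hC : LinearMap.range (C : G →ₗ[ℂ] F) ≤ LinearMap.range (A : E →ₗ[ℂ] F)) :
    ContinuousLinearMap.adjoint C ∘L A ∘L Z = ContinuousLinearMap.adjoint C := by
  rw [← h.2.2.1, ← adjoint_comp, comp_assoc, h.comp_comp_of_range_le hC]

theorem comp_comp_of_range_le_adjoint [NormedSpace ℂ G] (h : IsMPOp A Z) {C : G →L[ℂ] E}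
    (hC : LinearMap.range (C : G →ₗ[ℂ] E) ≤
      LinearMap.range (ContinuousLinearMap.adjoint A : F →ₗ[ℂ] E)) :
    Z ∘L A ∘L C = C := by
  rw [← comp_assoc]
  exact comp_eq_self_of_range_le (by rw [← h.2.2.2, ← adjoint_comp, h.1]) hC

theorem adjoint_comp_comp_of_range_le_adjoint [InnerProductSpace ℂ G] [CompleteSpace G]
    (h : IsMPOp A Z) {C : G →L[ℂ] E}
    (hC : LinearMap.range (C : G →ₗ[ℂ] E) ≤
      LinearMap.range (ContinuousLinearMap.adjoint A : F →ₗ[ℂ] E)) :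
    ContinuousLinearMap.adjoint C ∘L Z ∘L A = ContinuousLinearMap.adjoint C := by
  rw [← h.2.2.2, ← adjoint_comp, comp_assoc, h.comp_comp_of_range_le_adjoint hC]

theorem comp_self_eq_one_of_injective (h : IsMPOp A Z) (hA : Function.Injective A) :
    Z ∘L A = 1 := by
  ext x
  exact hA (by simpa using DFunLike.congr_fun h.1 x)

theorem comp_self_eq_one_of_eq_one_add_adjoint_comp
    [InnerProductSpace ℂ G] [CompleteSpace G] {S T : G →L[ℂ] G} {V W : G →L[ℂ] E}
    (h : IsMPOp S T) (hS : S = 1 + ContinuousLinearMap.adjoint V ∘L W)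
    (hV : V ∘L T ∘L S = V) : T ∘L S = 1 := by
  refine h.comp_self_eq_one_of_injective ?_
  rw [hS]
  exact injective_one_add_adjoint_comp (C := V ∘L T) (by rw [comp_assoc, ← hS, hV])

theorem isClosed_range (h : IsMPOp A Z) :
    IsClosed (LinearMap.range (A : E →ₗ[ℂ] F) : Set F) := by
  have hidem : IsIdempotentElem (A ∘L Z) := by
    rw [IsIdempotentElem, mul_def, ← comp_assoc, comp_assoc A, h.1]
  convert hidem.isClosed_range using 2
  ext y
  constructor
  · rintro ⟨x, rfl⟩
    exact ⟨A x, by simpa using DFunLike.congr_fun h.1 x⟩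
  · rintro ⟨y, rfl⟩
    exact ⟨Z y, rfl⟩

theorem of_comp (h : IsMPOp A Z) {B : E →L[ℂ] F} {C : F →L[ℂ] E}
    (hBC : B ∘L C = A ∘L Z) (hCB : C ∘L B = Z ∘L A)
    (hB : (A ∘L Z) ∘L B = B) (hC : (Z ∘L A) ∘L C = C) : IsMPOp B C :=
  ⟨by rw [← comp_assoc, hBC, hB], by rw [← comp_assoc, hCB, hC],
    by rw [hBC, h.2.2.1], by rw [hCB, h.2.2.2]⟩

end IsMPOp

theorem stmt_17_general {H₁ H₂ H₃ : Type*}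
    [NormedAddCommGroup H₁] [InnerProductSpace ℂ H₁] [CompleteSpace H₁]
    [NormedAddCommGroup H₂] [InnerProductSpace ℂ H₂] [CompleteSpace H₂]
    [NormedAddCommGroup H₃] [InnerProductSpace ℂ H₃] [CompleteSpace H₃]
    (A : H₁ →L[ℂ] H₂) (U : H₃ →L[ℂ] H₂) (V : H₃ →L[ℂ] H₁)
    (Adag : H₂ →L[ℂ] H₁) (hAdag : IsMPOp A Adag)
    (S : H₃ →L[ℂ] H₃) (hS : S = 1 + adjoint V ∘L Adag ∘L U)
    (Sdag : H₃ →L[ℂ] H₃) (hSdag : IsMPOp S Sdag)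
    (hU : LinearMap.range (U : H₃ →ₗ[ℂ] H₂) ≤ LinearMap.range (A : H₁ →ₗ[ℂ] H₂))
    (hV : LinearMap.range (V : H₃ →ₗ[ℂ] H₁) ≤ LinearMap.range (adjoint A : H₂ →ₗ[ℂ] H₁))
    (hUs : LinearMap.range (adjoint U : H₂ →ₗ[ℂ] H₃) ≤ LinearMap.range (S : H₃ →ₗ[ℂ] H₃))
    (hVs : LinearMap.range (adjoint V : H₁ →ₗ[ℂ] H₃) ≤ LinearMap.range (adjoint S : H₃ →ₗ[ℂ] H₃)) :
    IsClosed (LinearMap.range ((A + U ∘L adjoint V : H₁ →L[ℂ] H₂) : H₁ →ₗ[ℂ] H₂) : Set H₂) ∧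
      IsMPOp (A + U ∘L adjoint V)
        (Ring.inverse (1 + Adag ∘L U ∘L (1 - Sdag ∘L S) ∘L adjoint U ∘L adjoint Adag) ∘L
          (Adag - Adag ∘L U ∘L Sdag ∘L adjoint V ∘L Adag) ∘L
          Ring.inverse (1 + adjoint Adag ∘L V ∘L (1 - S ∘L Sdag) ∘L adjoint V ∘L Adag)) := by
  have hAU : A ∘L Adag ∘L U = U := hAdag.comp_comp_of_range_le hU
  have hVA : adjoint V ∘L Adag ∘L A = adjoint V :=
    hAdag.adjoint_comp_comp_of_range_le_adjoint hV
  have hSdS : Sdag ∘L S = 1 := hSdag.comp_self_eq_one_of_eq_one_add_adjoint_comp hS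
    (by simpa using hSdag.adjoint_comp_comp_of_range_le_adjoint hVs)
  have hSSd : S ∘L Sdag = 1 := by
    have hSadj : adjoint S = 1 + adjoint U ∘L adjoint Adag ∘L V := by
      rw [hS, map_add, adjoint_one, adjoint_comp, adjoint_comp, adjoint_adjoint, comp_assoc]
    have hUS : U ∘L adjoint Sdag ∘L adjoint S = U := by
      rw [← adjoint_comp, hSdag.2.2.1]
      simpa using hSdag.adjoint_comp_comp_of_range_le hUs
    rw [← adjoint_adjoint (S ∘L Sdag), adjoint_comp,
      hSdag.adjoint.comp_self_eq_one_of_eq_one_add_adjoint_comp hSadj hUS, adjoint_one]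
  have hMP := hAdag.of_comp (add_comp_woodbury hAU (by rw [← hS, hSSd]))
    (woodbury_comp_add hVA (by rw [← hS, hSdS]))
    (by rw [comp_add, comp_assoc, hAdag.1, ← comp_assoc, comp_assoc A, hAU])
    (by rw [comp_sub, comp_assoc, hAdag.2.1, ← comp_assoc, comp_assoc Adag, hAdag.2.1])
  simp only [hSdS, hSSd, sub_self, comp_zero, zero_comp, add_zero, Ring.inverse_one]
  simp only [one_def, id_comp, comp_id]
  exact ⟨hMP.isClosed_range, hMP⟩

theorem stmt_17 {H₁ H₂ H₃ : Type*}
    [NormedAddCommGroup H₁] [InnerProductSpace ℂ H₁] [CompleteSpace H₁]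
    [NormedAddCommGroup H₂] [InnerProductSpace ℂ H₂] [CompleteSpace H₂]
    [NormedAddCommGroup H₃] [InnerProductSpace ℂ H₃] [CompleteSpace H₃]
    (A : H₁ →L[ℂ] H₂) (U : H₃ →L[ℂ] H₂) (V : H₃ →L[ℂ] H₁)
    (Adag : H₂ →L[ℂ] H₁) (hAdag : IsMPOp A Adag)
    (S : H₃ →L[ℂ] H₃) (hS : S = 1 + adjoint V ∘L Adag ∘L U)
    (Sdag : H₃ →L[ℂ] H₃) (hSdag : IsMPOp S Sdag)
    (hAclosed : IsClosed (LinearMap.range (A : H₁ →ₗ[ℂ] H₂) : Set H₂))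
    (hSclosed : IsClosed (LinearMap.range (S : H₃ →ₗ[ℂ] H₃) : Set H₃))
    (hU : LinearMap.range (U : H₃ →ₗ[ℂ] H₂) ≤ LinearMap.range (A : H₁ →ₗ[ℂ] H₂))
    (hV : LinearMap.range (V : H₃ →ₗ[ℂ] H₁) ≤ LinearMap.range (adjoint A : H₂ →ₗ[ℂ] H₁))
    (hUs : LinearMap.range (adjoint U : H₂ →ₗ[ℂ] H₃) ≤ LinearMap.range (S : H₃ →ₗ[ℂ] H₃))
    (hVs : LinearMap.range (adjoint V : H₁ →ₗ[ℂ] H₃) ≤ LinearMap.range (adjoint S : H₃ →ₗ[ℂ] H₃)) :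
    IsClosed (LinearMap.range ((A + U ∘L adjoint V : H₁ →L[ℂ] H₂) : H₁ →ₗ[ℂ] H₂) : Set H₂) ∧
      IsMPOp (A + U ∘L adjoint V)
        (Ring.inverse (1 + Adag ∘L U ∘L (1 - Sdag ∘L S) ∘L adjoint U ∘L adjoint Adag) ∘L
          (Adag - Adag ∘L U ∘L Sdag ∘L adjoint V ∘L Adag) ∘L
          Ring.inverse (1 + adjoint Adag ∘L V ∘L (1 - S ∘L Sdag) ∘L adjoint V ∘L Adag)) :=
  stmt_17_general A U V Adag hAdag S hS Sdag hSdag hU hV hUs hVs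
end
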